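/- Let $(\alpha,\beta)$ be a Bailey pair relative to $a$ and let $k \ge 1$ be an integer. Define $\alpha_L^{(k)} = a^{kL}q^{kL^2}\alpha_L$ and $\beta_L^{(k)} = \sum_{L \ge r_1 \ge \cdots \ge r_k \ge 0} \frac{a^{r_1+\cdots+r_k} q^{r_1^2+\cdots+r_k^2}}{(q)_{L-r_1}(q)_{r_1-r_2}\cdots(q)_{r_{k-1}-r_k}} \beta_{r_k}$. Then $(\alpha^{(k)},\beta^{(k)})$ is a Bailey pair relative to $a$. -/

import Mathlib

/-!
One step of the Bailey chain with `ρ₁, ρ₂ → ∞` sends a Bailey pair `(α, β)` relative to `a` to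
`(a^L q^{L²} α_L, ∑_r a^r q^{r²} β_r / (q)_{L-r})`. After exchanging the two sums and shifting
`a ↦ a q^{2i}`, this reduces to the identity
`∑_j b^j q^{j²} / ((q)_j (q)_{n-j} (bq)_j) = 1 / ((q)_n (bq)_n)`,
which follows from the `q`-Pascal rule by induction on `n`. Iterating the step `k` times gives
`(α^{(k)}, β^{(k)})`: unfolding the `k` nested sums of the iterate yields exactly the multiple sum
over `L ≥ r₁ ≥ ⋯ ≥ r_k ≥ 0` defining `β^{(k)}`.
-/

open Finset

/-- The $q$-Pochhammer symbol $(x;q)_n$. -/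
noncomputable def qp (q x : ℂ) (n : ℕ) : ℂ := ∏ k ∈ Finset.range n, (1 - x * q ^ k)

@[simp]
lemma qp_zero (q x : ℂ) : qp q x 0 = 1 := prod_range_zero _

lemma qp_succ (q x : ℂ) (n : ℕ) : qp q x (n + 1) = qp q x n * (1 - x * q ^ n) :=
  prod_range_succ _ n

lemma qp_add (q x : ℂ) (m n : ℕ) : qp q x (m + n) = qp q x m * qp q (x * q ^ m) n := by
  simp only [qp, prod_range_add, pow_add, mul_assoc]

lemma qp_ne_zero_of_le {q x : ℂ} {m n : ℕ} (hn : qp q x n ≠ 0) (hmn : m ≤ n) : qp q x m ≠ 0 := by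
  obtain ⟨d, rfl⟩ := Nat.exists_eq_add_of_le hmn
  exact left_ne_zero_of_mul (qp_add q x m d ▸ hn)

noncomputable def qBinom (q : ℂ) (n j : ℕ) : ℂ :=
  if j ≤ n then qp q q n / (qp q q j * qp q q (n - j)) else 0

lemma qBinom_of_lt (q : ℂ) {n j : ℕ} (h : n < j) : qBinom q n j = 0 := by
  simp [qBinom, show ¬ j ≤ n by omega]

section qBinom

variable {q : ℂ} (hq : ∀ n, qp q q n ≠ 0)
include hq

lemma qBinom_zero_right (n : ℕ) : qBinom q n 0 = 1 := by
  simp [qBinom, div_self (hq n)]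

lemma qBinom_succ_succ (n j : ℕ) :
    qBinom q (n + 1) (j + 1) = qBinom q n (j + 1) + q ^ (n - j) * qBinom q n j := by
  rcases lt_trichotomy j n with hjn | rfl | hnj
  · obtain ⟨d, rfl⟩ := Nat.exists_eq_add_of_lt hjn
    have e1 : j + d + 1 + 1 - (j + 1) = d + 1 := by omega
    have e2 : j + d + 1 - (j + 1) = d := by omega
    have e3 : j + d + 1 - j = d + 1 := by omega
    simp only [qBinom, if_pos (show j + 1 ≤ j + d + 1 + 1 by omega),
      if_pos (show j + 1 ≤ j + d + 1 by omega), if_pos (show j ≤ j + d + 1 by omega), e1, e2, e3,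
      qp_succ q q (j + d + 1), qp_succ q q d, qp_succ q q j]
    have h1 := hq (j + d + 1); have h2 := hq d; have h3 := hq j
    have h4 := right_ne_zero_of_mul (qp_succ q q d ▸ hq (d + 1))
    have h5 := right_ne_zero_of_mul (qp_succ q q j ▸ hq (j + 1))
    field_simp
    ring
  · simp [qBinom, div_self (hq (j + 1)), div_self (hq j)]
  · simp [qBinom, show ¬ j + 1 ≤ n + 1 by omega, show ¬ j + 1 ≤ n by omega,
      show ¬ j ≤ n by omega]

lemma sum_qBinom_succ_mul (n : ℕ) (F : ℕ → ℂ) :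
    ∑ j ∈ range (n + 2), qBinom q (n + 1) j * F j
      = ∑ j ∈ range (n + 1), qBinom q n j * F j
        + ∑ j ∈ range (n + 1), q ^ (n - j) * qBinom q n j * F (j + 1) := by
  have hext : ∑ j ∈ range (n + 1), qBinom q n j * F j
      = ∑ j ∈ range (n + 2), qBinom q n j * F j := by
    rw [sum_range_succ _ (n + 1), qBinom_of_lt q (Nat.lt_succ_self n), zero_mul, add_zero]
  rw [hext, sum_range_succ', sum_range_succ' _ (n + 1)]
  simp only [qBinom_succ_succ hq, qBinom_zero_right hq, add_mul, sum_add_distrib]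
  ring

/-- Writing `T n b` for the left-hand side, the `q`-Pascal rule gives
`T (n + 1) b = (1 - b q^(n+1)) T n b + b q^(n+1) T n (b q)`. -/
lemma sum_qBinom_mul_qp_eq_one (n : ℕ) (b : ℂ) :
    ∑ j ∈ range (n + 1), qBinom q n j * (b ^ j * q ^ (j ^ 2) * qp q (b * q ^ (j + 1)) (n - j))
      = 1 := by
  induction n generalizing b with
  | zero => simp [qBinom_zero_right hq]
  | succ n ih =>
    rw [sum_qBinom_succ_mul hq]
    have hkeep : ∀ j ∈ range (n + 1),
        qBinom q n j * (b ^ j * q ^ (j ^ 2) * qp q (b * q ^ (j + 1)) (n + 1 - j))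
          = (1 - b * q ^ (n + 1)) *
            (qBinom q n j * (b ^ j * q ^ (j ^ 2) * qp q (b * q ^ (j + 1)) (n - j))) := by
      intro j hj
      obtain ⟨d, rfl⟩ := Nat.exists_eq_add_of_le (Nat.lt_succ_iff.mp (mem_range.mp hj))
      rw [show j + d + 1 - j = d + 1 by omega, Nat.add_sub_cancel_left, qp_succ]
      ring
    have hshift : ∀ j ∈ range (n + 1),
        q ^ (n - j) * qBinom q n j * (b ^ (j + 1) * q ^ ((j + 1) ^ 2) *
            qp q (b * q ^ (j + 1 + 1)) (n + 1 - (j + 1)))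
          = b * q ^ (n + 1) *
            (qBinom q n j * ((b * q) ^ j * q ^ (j ^ 2) * qp q (b * q * q ^ (j + 1)) (n - j))) := by
      intro j hj
      obtain ⟨d, rfl⟩ := Nat.exists_eq_add_of_le (Nat.lt_succ_iff.mp (mem_range.mp hj))
      rw [show j + d + 1 - (j + 1) = d by omega, Nat.add_sub_cancel_left,
        show b * q * q ^ (j + 1) = b * q ^ (j + 1 + 1) by ring]
      ring
    rw [sum_congr rfl hkeep, sum_congr rfl hshift, ← mul_sum, ← mul_sum, ih, ih]
    ring

lemma sum_div_qp_eq_one_div (n : ℕ) (b : ℂ) (hb : qp q (b * q) n ≠ 0) :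
    ∑ j ∈ range (n + 1), b ^ j * q ^ (j ^ 2) / (qp q q j * qp q q (n - j) * qp q (b * q) j)
      = 1 / (qp q q n * qp q (b * q) n) := by
  rw [eq_div_iff (mul_ne_zero (hq n) hb), sum_mul, ← sum_qBinom_mul_qp_eq_one hq n b]
  refine sum_congr rfl fun j hj => ?_
  have hjn : j ≤ n := Nat.lt_succ_iff.mp (mem_range.mp hj)
  have hsplit : qp q (b * q) n = qp q (b * q) j * qp q (b * q ^ (j + 1)) (n - j) := by
    rw [← Nat.add_sub_cancel' hjn, qp_add, Nat.add_sub_cancel_left, pow_succ', mul_assoc]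
  have hbj : qp q (b * q) j ≠ 0 := qp_ne_zero_of_le hb hjn
  rw [hsplit, qBinom, if_pos hjn]
  have := hq j; have := hq (n - j)
  field_simp

end qBinom

def IsBaileyPair (q a : ℂ) (α β : ℕ → ℂ) : Prop :=
  ∀ L, β L = ∑ i ∈ range (L + 1), α i / (qp q q (L - i) * qp q (a * q) (L + i))

/-- One step of the Bailey chain on the `β` side, in the limit `ρ₁, ρ₂ → ∞`. -/
noncomputable def baileyStep (q a : ℂ) (β : ℕ → ℂ) (L : ℕ) : ℂ :=
  ∑ r ∈ range (L + 1), a ^ r * q ^ (r ^ 2) / qp q q (L - r) * β r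

namespace IsBaileyPair

variable {q a : ℂ} {α β : ℕ → ℂ} (hq : ∀ n, qp q q n ≠ 0) (haq : ∀ n, qp q (a * q) n ≠ 0)
include hq haq

theorem step (h : IsBaileyPair q a α β) :
    IsBaileyPair q a (fun L => a ^ L * q ^ (L ^ 2) * α L) (baileyStep q a β) := by
  intro L
  set f : ℕ → ℕ → ℂ := fun i j => a ^ (i + j) * q ^ ((i + j) ^ 2) / qp q q (L - (i + j)) *
    (α i / (qp q q j * qp q (a * q) (2 * i + j)))
  have hdiag : baileyStep q a β L =
      ∑ r ∈ range (L + 1), ∑ i ∈ range (r + 1), f i (r - i) := by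
    refine sum_congr rfl fun r _ => ?_
    rw [h r, mul_sum]
    refine sum_congr rfl fun i hi => ?_
    have hir : i ≤ r := Nat.lt_succ_iff.mp (mem_range.mp hi)
    simp only [f, Nat.add_sub_cancel' hir, show 2 * i + (r - i) = r + i by omega]
  rw [hdiag, sum_range_diag_flip]
  refine sum_congr rfl fun i hi => ?_
  have hiL : i ≤ L := Nat.lt_succ_iff.mp (mem_range.mp hi)
  set b := a * q ^ (2 * i)
  have hqp : ∀ m, qp q (a * q) (2 * i + m) = qp q (a * q) (2 * i) * qp q (b * q) m := fun m => by
    rw [qp_add, mul_right_comm]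
  have hb : qp q (b * q) (L - i) ≠ 0 := right_ne_zero_of_mul (hqp (L - i) ▸ haq _)
  have hinner : ∀ j ∈ range (L + 1 - i), f i j =
      a ^ i * q ^ (i ^ 2) * α i / qp q (a * q) (2 * i) *
        (b ^ j * q ^ (j ^ 2) / (qp q q j * qp q q (L - i - j) * qp q (b * q) j)) := by
    intro j _
    have := hq j; have := haq (2 * i); have := right_ne_zero_of_mul (hqp j ▸ haq (2 * i + j))
    simp only [f, hqp, b, Nat.sub_sub]
    field_simp
    ring
  rw [sum_congr rfl hinner, ← mul_sum, show L + 1 - i = L - i + 1 by omega,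
    sum_div_qp_eq_one_div hq (L - i) b hb, show L + i = 2 * i + (L - i) by omega, hqp]
  have := hq (L - i); have := haq (2 * i)
  field_simp

theorem iterate (h : IsBaileyPair q a α β) (k : ℕ) :
    IsBaileyPair q a (fun L => a ^ (k * L) * q ^ (k * L ^ 2) * α L) ((baileyStep q a)^[k] β) := by
  induction k with
  | zero => simpa using h
  | succ k ih =>
    rw [Function.iterate_succ_apply']
    convert ih.step hq haq using 2 with L
    ring

end IsBaileyPair

def padSeq {k n : ℕ} (r : Fin k → Fin n) (i : ℕ) : ℕ := if h : i < k then r ⟨i, h⟩ else 0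

@[simp]
lemma padSeq_cons_zero {k n : ℕ} (x : Fin n) (s : Fin k → Fin n) :
    padSeq (Fin.cons x s : Fin (k + 1) → Fin n) 0 = x := rfl

@[simp]
lemma padSeq_cons_succ {k n : ℕ} (x : Fin n) (s : Fin k → Fin n) (i : ℕ) :
    padSeq (Fin.cons x s : Fin (k + 1) → Fin n) (i + 1) = padSeq s i := by
  by_cases hi : i < k
  · simp only [padSeq, dif_pos hi, dif_pos (Nat.succ_lt_succ hi)]
    show ((Fin.cons x s : Fin (k + 1) → Fin n) (Fin.succ ⟨i, hi⟩) : ℕ) = s ⟨i, hi⟩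
    rw [Fin.cons_succ]
  · simp only [padSeq, dif_neg hi, dif_neg (mt Nat.lt_of_succ_lt_succ hi)]

lemma sum_pi_fin_succ {M : Type*} [AddCommMonoid M] {k n : ℕ} (F : (Fin (k + 1) → Fin n) → M) :
    ∑ r, F r = ∑ x, ∑ s : Fin k → Fin n, F (Fin.cons x s) := by
  rw [← (Fin.consEquiv fun _ => Fin n).sum_comp, Fintype.sum_prod_type]
  rfl

lemma sum_fin_ite_le {N L : ℕ} (hLN : L ≤ N) (g : ℕ → ℂ) :
    ∑ x : Fin (N + 1), (if (x : ℕ) ≤ L then g x else 0) = ∑ x ∈ range (L + 1), g x := by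
  rw [Fin.sum_univ_eq_sum_range (fun x => if x ≤ L then g x else 0), ← sum_filter]
  congr 1
  ext x
  simp only [mem_filter, mem_range]
  omega

/-- The summand of `β^{(k)}_L` at `(r₁, …, r_k) = (f 0, …, f (k - 1))`. -/
noncomputable def chainWeight (q a : ℂ) (β : ℕ → ℂ) (k L : ℕ) (f : ℕ → ℕ) : ℂ :=
  if ∀ i < k - 1, f (i + 1) ≤ f i then
    a ^ (∑ i ∈ Finset.range k, f i) * q ^ (∑ i ∈ Finset.range k, (f i) ^ 2) /
      (qp q q (L - f 0) * ∏ i ∈ Finset.range (k - 1), qp q q (f i - f (i + 1))) *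
      β (f (k - 1))
  else 0

section chainWeight

variable (q a : ℂ) (β : ℕ → ℂ)

lemma chainWeight_one (L : ℕ) (f : ℕ → ℕ) :
    chainWeight q a β 1 L f = a ^ f 0 * q ^ (f 0 ^ 2) / qp q q (L - f 0) * β (f 0) := by
  simp [chainWeight]

lemma chainWeight_succ_succ (k L : ℕ) (f : ℕ → ℕ) :
    chainWeight q a β (k + 2) L f = if f 1 ≤ f 0 then
      a ^ f 0 * q ^ (f 0 ^ 2) / qp q q (L - f 0) *
        chainWeight q a β (k + 1) (f 0) (fun i => f (i + 1))
    else 0 := by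
  have hchain : (∀ i < k + 1, f (i + 1) ≤ f i) ↔ f 1 ≤ f 0 ∧ ∀ i < k, f (i + 2) ≤ f (i + 1) :=
    Nat.forall_lt_succ_left
  simp only [chainWeight, show k + 2 - 1 = k + 1 from rfl, Nat.add_sub_cancel, hchain, ite_and]
  split_ifs
  · rw [sum_range_succ' _ (k + 1), sum_range_succ' _ (k + 1), prod_range_succ' _ k, pow_add,
      pow_add]
    ring
  · simp
  · rfl

/-- The bound `N ≥ L` on the indices is kept free so that the induction on `k` goes through. -/
lemma sum_chainWeight_eq_iterate (k N L : ℕ) (hLN : L ≤ N) :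
    ∑ r : Fin (k + 1) → Fin (N + 1),
      (if padSeq r 0 ≤ L then chainWeight q a β (k + 1) L (padSeq r) else 0)
      = (baileyStep q a)^[k + 1] β L := by
  induction k generalizing L with
  | zero =>
    rw [sum_pi_fin_succ]
    simp only [zero_add, padSeq_cons_zero, chainWeight_one, Finset.univ_unique, sum_singleton]
    exact sum_fin_ite_le hLN (fun x => a ^ x * q ^ (x ^ 2) / qp q q (L - x) * β x)
  | succ k ih =>
    rw [sum_pi_fin_succ]
    simp only [padSeq_cons_zero, chainWeight_succ_succ, padSeq_cons_succ]
    calc _ = ∑ x : Fin (N + 1), if (x : ℕ) ≤ L then a ^ (x : ℕ) * q ^ ((x : ℕ) ^ 2) /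
              qp q q (L - x) * (baileyStep q a)^[k + 1] β x else 0 := by
          refine sum_congr rfl fun x _ => ?_
          split_ifs
          · rw [← ih x x.is_le, mul_sum]
            refine sum_congr rfl fun s _ => ?_
            split_ifs <;> simp
          · simp
      _ = (baileyStep q a)^[k + 2] β L := by
          rw [sum_fin_ite_le hLN (fun x => a ^ x * q ^ (x ^ 2) / qp q q (L - x) *
            (baileyStep q a)^[k + 1] β x), Function.iterate_succ_apply' _ (k + 1)]
          rfl

end chainWeight

/-- The $k$-fold iterated Bailey chain with $\rho_1,\rho_2\to\infty$:
$\alpha^{(k)}_L = a^{kL}q^{kL^2}\alpha_L$ and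
$\beta^{(k)}_L = \sum_{L\ge r_1\ge\cdots\ge r_k\ge 0}
\frac{a^{r_1+\cdots+r_k}q^{r_1^2+\cdots+r_k^2}}{(q)_{L-r_1}(q)_{r_1-r_2}\cdots(q)_{r_{k-1}-r_k}}
\beta_{r_k}$ form a Bailey pair relative to $a$. -/
theorem bailey_chain_iterated (q a : ℂ) (k : ℕ) (hk : 1 ≤ k)
    (hq0 : ∀ n : ℕ, qp q q n ≠ 0)
    (haq : ∀ n : ℕ, qp q (a * q) n ≠ 0)
    (α β αk βk : ℕ → ℂ)
    (hBP : ∀ L, β L = ∑ i ∈ Finset.range (L + 1),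
      α i / (qp q q (L - i) * qp q (a * q) (L + i)))
    (hαk : ∀ L, αk L = a ^ (k * L) * q ^ (k * L ^ 2) * α L)
    (hβk : ∀ L, βk L = ∑ r : Fin k → Fin (L + 1),
      (fun f : ℕ → ℕ =>
        if ∀ i < k - 1, f (i + 1) ≤ f i then
          a ^ (∑ i ∈ Finset.range k, f i) * q ^ (∑ i ∈ Finset.range k, (f i) ^ 2) /
            (qp q q (L - f 0) * ∏ i ∈ Finset.range (k - 1), qp q q (f i - f (i + 1))) *
            β (f (k - 1))
        else 0)
      (fun i => if h : i < k then (r ⟨i, h⟩ : ℕ) else 0)) :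
    ∀ L, βk L = ∑ i ∈ Finset.range (L + 1),
      αk i / (qp q q (L - i) * qp q (a * q) (L + i)) := by
  intro L
  obtain ⟨k, rfl⟩ := Nat.exists_eq_add_of_le' hk
  have hiter : IsBaileyPair q a (fun L => a ^ ((k + 1) * L) * q ^ ((k + 1) * L ^ 2) * α L)
      ((baileyStep q a)^[k + 1] β) := IsBaileyPair.iterate hq0 haq hBP (k + 1)
  calc βk L = ∑ r : Fin (k + 1) → Fin (L + 1), chainWeight q a β (k + 1) L (padSeq r) := hβk L
    _ = ∑ r : Fin (k + 1) → Fin (L + 1),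
          if padSeq r 0 ≤ L then chainWeight q a β (k + 1) L (padSeq r) else 0 :=
        sum_congr rfl fun r _ => (if_pos (Fin.is_le (r 0))).symm
    _ = (baileyStep q a)^[k + 1] β L := sum_chainWeight_eq_iterate q a β k L L le_rfl
    _ = _ := by simp only [hiter L, hαk]
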